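/- For all ξ₁, ξ₂ ∈ ℝ^n and all choices of signs ± applied consistently, |(τ₁+τ₂) ∓ |ξ₁+ξ₂|| ≤ |τ₁ ∓ |ξ₁|| + |τ₂ ∓ |ξ₂|| + 2·min(|ξ₁|, |ξ₂|) for all real τ₁, τ₂. -/
import Mathlib

theorem modulation_triangle (n : ℕ) (ξ₁ ξ₂ : EuclideanSpace ℝ (Fin n))
    (τ₁ τ₂ : ℝ) (sgn : ℝ) (hsgn : sgn = 1 ∨ sgn = -1) :
    |(τ₁ + τ₂) - sgn * ‖ξ₁ + ξ₂‖|
      ≤ |τ₁ - sgn * ‖ξ₁‖| + |τ₂ - sgn * ‖ξ₂‖| + 2 * min ‖ξ₁‖ ‖ξ₂‖ := by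
  have h1 : ‖ξ₁ + ξ₂‖ ≤ ‖ξ₁‖ + ‖ξ₂‖ := norm_add_le _ _
  have ha : |‖ξ₁ + ξ₂‖ - ‖ξ₂‖| ≤ ‖ξ₁‖ := by
    simpa using abs_norm_sub_norm_le (ξ₁ + ξ₂) ξ₂
  have hb : |‖ξ₁ + ξ₂‖ - ‖ξ₁‖| ≤ ‖ξ₂‖ := by
    simpa [add_comm] using abs_norm_sub_norm_le (ξ₁ + ξ₂) ξ₁
  have ha' := abs_le.mp ha
  have hb' := abs_le.mp hb
  have hm : ‖ξ₁‖ + ‖ξ₂‖ - ‖ξ₁ + ξ₂‖ ≤ 2 * min ‖ξ₁‖ ‖ξ₂‖ := by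
    rw [two_mul]; rcases min_cases ‖ξ₁‖ ‖ξ₂‖ with ⟨h, _⟩ | ⟨h, _⟩ <;> rw [h] <;> linarith [ha'.1, hb'.1]
  have hmn : (0:ℝ) ≤ min ‖ξ₁‖ ‖ξ₂‖ := le_min (norm_nonneg _) (norm_nonneg _)
  rcases hsgn with h | h <;> subst h <;> rw [abs_le] <;> constructor <;>
    simp only [one_mul, neg_one_mul, neg_mul, sub_neg_eq_add] <;>
    [ linarith [neg_abs_le (τ₁ - ‖ξ₁‖), neg_abs_le (τ₂ - ‖ξ₂‖), hm, h1];
      linarith [le_abs_self (τ₁ - ‖ξ₁‖), le_abs_self (τ₂ - ‖ξ₂‖), hm, h1];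
      linarith [neg_abs_le (τ₁ + ‖ξ₁‖), neg_abs_le (τ₂ + ‖ξ₂‖), hm, h1];
      linarith [le_abs_self (τ₁ + ‖ξ₁‖), le_abs_self (τ₂ + ‖ξ₂‖), hm, h1] ]
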